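/- arXiv:2604.06283 — 2 statements merged into one kernel-verified Lean document; each statement's English description precedes it below -/
import Mathlib

section
/- Let h ∈ L²(ℝ) with ω·h ∈ H^{1/2}(ℝ), and let δ > 0. Then the Gagliardo integral of h over the region { (ω,ξ) : |ω−ξ| < δ and |ω+ξ| > δ } is finite: ∬_{|ω−ξ|<δ, |ω+ξ|>δ} |h(ω)−h(ξ)|²/|ω−ξ|² dω dξ < ∞. -/
open MeasureTheory Set
open scoped ENNReal FourierTransform

noncomputable def gagliardo (Ω : Set ℝ) (f : ℝ → ℂ) : ℝ≥0∞ :=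
  ∫⁻ p : ℝ × ℝ in Ω ×ˢ Ω, (‖f p.1 - f p.2‖₊ : ℝ≥0∞) ^ 2 / (‖p.1 - p.2‖₊ : ℝ≥0∞) ^ 2

def MemH12 (Ω : Set ℝ) (f : ℝ → ℂ) : Prop :=
  MemLp f 2 (volume.restrict Ω) ∧ gagliardo Ω f < ⊤

def HasWeakDeriv (Ω : Set ℝ) (f g : ℝ → ℂ) : Prop :=
  ∀ φ : ℝ → ℝ, ContDiff ℝ (⊤ : ℕ∞) φ → HasCompactSupport φ → tsupport φ ⊆ Ω →
    ∫ x in Ω, f x * (Complex.ofReal (deriv φ x)) = - ∫ x in Ω, g x * (Complex.ofReal (φ x))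

def HasIterWeakDeriv (Ω : Set ℝ) (f : ℝ → ℂ) : ℕ → (ℝ → ℂ) → Prop
  | 0, g => ∀ x ∈ Ω, g x = f x
  | n + 1, g => ∃ h, HasIterWeakDeriv Ω f n h ∧ HasWeakDeriv Ω h g

def MemHk (Ω : Set ℝ) (k : ℕ) (f : ℝ → ℂ) : Prop :=
  ∀ j ≤ k, ∃ g, HasIterWeakDeriv Ω f j g ∧ MemLp g 2 (volume.restrict Ω)

def MemHkHalf (Ω : Set ℝ) (k : ℕ) (f : ℝ → ℂ) : Prop :=
  MemHk Ω k f ∧ ∃ g, HasIterWeakDeriv Ω f k g ∧ MemH12 Ω g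


lemma real_half_aux {δ ω : ℝ} (A B H d : ℝ) (hδ : 0 < δ) (hω : δ/2 < |ω|) (hd : 0 < d)
    (hA : 0 ≤ A) (hB : 0 ≤ B) (hH : 0 ≤ H) (key : |ω| * A ≤ B + d * H) :
    A^2/d^2 ≤ 8/δ^2 * (B^2/d^2 + H^2) := by
  have h1 : (δ/2)^2 < ω^2 := by
    nlinarith [mul_self_lt_mul_self (by positivity : (0:ℝ) ≤ δ/2) hω, sq_abs ω]
  have hkey2 : A^2*δ^2 ≤ 8*(B^2+d^2*H^2) := by
    nlinarith [mul_self_le_mul_self (mul_nonneg (abs_nonneg ω) hA) key,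
      sq_nonneg (B - d*H), sq_abs ω, mul_le_mul_of_nonneg_left h1.le (sq_nonneg A)]
  have e2 : 8/δ^2 * (B^2/d^2 + H^2) = (8*(B^2+d^2*H^2))/(δ^2*d^2) := by
    field_simp
  rw [e2, div_le_div_iff₀ (by positivity) (by positivity)]
  nlinarith [hkey2, sq_nonneg d, mul_pos hd hd]

lemma ofReal_norm_eq_coe_nnnorm {E : Type*} [SeminormedAddGroup E] (a : E) :
    ENNReal.ofReal ‖a‖ = (‖a‖₊ : ℝ≥0∞) := ofReal_norm a

lemma enn_half (h : ℝ → ℂ) {δ ω ξ : ℝ} (hδ : 0 < δ) (hω : δ/2 < |ω|) (hne : ω ≠ ξ) :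
    (‖h ω - h ξ‖₊ : ℝ≥0∞)^2 / (‖ω - ξ‖₊ : ℝ≥0∞)^2 ≤
      ENNReal.ofReal (8/δ^2) * ((‖(ω:ℂ)*h ω - (ξ:ℂ)*h ξ‖₊ : ℝ≥0∞)^2 / (‖ω - ξ‖₊ : ℝ≥0∞)^2
        + (‖h ξ‖₊ : ℝ≥0∞)^2) := by
  have hd : 0 < |ω - ξ| := abs_pos.2 (sub_ne_zero.2 hne)
  have key : |ω| * ‖h ω - h ξ‖ ≤ ‖(ω:ℂ)*h ω - (ξ:ℂ)*h ξ‖ + |ω - ξ| * ‖h ξ‖ := by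
    have e : (ω:ℂ) * (h ω - h ξ) = ((ω:ℂ)*h ω - (ξ:ℂ)*h ξ) - (((ω - ξ : ℝ)):ℂ) * h ξ := by
      push_cast; ring
    calc |ω| * ‖h ω - h ξ‖ = ‖(ω:ℂ) * (h ω - h ξ)‖ := by
          rw [norm_mul, Complex.norm_real, Real.norm_eq_abs]
      _ ≤ _ := by
          rw [e]
          refine (norm_sub_le _ _).trans ?_
          rw [norm_mul, Complex.norm_real, Real.norm_eq_abs]
  have hreal := real_half_aux (‖h ω - h ξ‖) (‖(ω:ℂ)*h ω - (ξ:ℂ)*h ξ‖) (‖h ξ‖) (|ω - ξ|)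
    hδ hω hd (norm_nonneg _) (norm_nonneg _) (norm_nonneg _) key
  have hds : (‖ω - ξ‖₊ : ℝ≥0∞)^2 = ENNReal.ofReal (|ω - ξ|^2) := by
    rw [← ofReal_norm_eq_coe_nnnorm, ← ENNReal.ofReal_pow (norm_nonneg _), Real.norm_eq_abs]
  rw [hds, ← ofReal_norm_eq_coe_nnnorm (h ω - h ξ), ← ENNReal.ofReal_pow (norm_nonneg _),
    ← ofReal_norm_eq_coe_nnnorm ((ω:ℂ)*h ω - (ξ:ℂ)*h ξ), ← ENNReal.ofReal_pow (norm_nonneg _),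
    ← ofReal_norm_eq_coe_nnnorm (h ξ), ← ENNReal.ofReal_pow (norm_nonneg _),
    ← ENNReal.ofReal_div_of_pos (by positivity), ← ENNReal.ofReal_div_of_pos (by positivity),
    ← ENNReal.ofReal_add (by positivity) (by positivity),
    ← ENNReal.ofReal_mul (by positivity)]
  exact ENNReal.ofReal_le_ofReal hreal


lemma nnnorm_sub_rev' {E : Type*} [SeminormedAddGroup E] (a b : E) : ‖a - b‖₊ = ‖b - a‖₊ := by
  rw [← nnnorm_neg, neg_sub]

lemma ioo_iff {x y δ : ℝ} : |x - y| < δ ↔ y ∈ Ioo (x - δ) (x + δ) := by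
  rw [mem_Ioo, abs_sub_lt_iff]
  constructor <;> (rintro ⟨a, b⟩; exact ⟨by linarith, by linarith⟩)

lemma strip_fst (f : ℝ → ℂ) (hf : AEMeasurable f (volume : Measure ℝ)) (δ : ℝ) :
    ∫⁻ p : ℝ × ℝ in {p : ℝ × ℝ | |p.1 - p.2| < δ}, (‖f p.1‖₊ : ℝ≥0∞)^2
      = (∫⁻ x, (‖f x‖₊ : ℝ≥0∞)^2) * ENNReal.ofReal (2*δ) := by
  have hA : MeasurableSet {p : ℝ × ℝ | |p.1 - p.2| < δ} :=
    measurableSet_lt (measurable_fst.sub measurable_snd).abs measurable_const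
  rw [← lintegral_indicator hA]
  rw [Measure.volume_eq_prod ℝ ℝ]
  have hm : AEMeasurable (fun p : ℝ × ℝ =>
      ({p : ℝ × ℝ | |p.1 - p.2| < δ}).indicator (fun p => (‖f p.1‖₊ : ℝ≥0∞)^2) p)
      ((volume : Measure ℝ).prod volume) :=
    ((hf.comp_fst.enorm).pow_const 2).indicator hA
  rw [lintegral_prod _ hm]
  have inner : ∀ x : ℝ,
      (∫⁻ y, ({p : ℝ × ℝ | |p.1 - p.2| < δ}).indicator (fun p => (‖f p.1‖₊ : ℝ≥0∞)^2) (x, y))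
        = (‖f x‖₊ : ℝ≥0∞)^2 * ENNReal.ofReal (2*δ) := by
    intro x
    have e : ∀ y : ℝ, ({p : ℝ × ℝ | |p.1 - p.2| < δ}).indicator
        (fun p => (‖f p.1‖₊ : ℝ≥0∞)^2) (x, y)
        = (Ioo (x - δ) (x + δ)).indicator (fun _ => (‖f x‖₊ : ℝ≥0∞)^2) y := by
      intro y
      simp only [Set.indicator_apply, mem_setOf_eq]
      rw [if_congr ioo_iff rfl rfl]
    rw [lintegral_congr e, lintegral_indicator_const measurableSet_Ioo, Real.volume_Ioo,
      show x + δ - (x - δ) = 2*δ by ring]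
  rw [lintegral_congr inner, lintegral_mul_const' _ _ ENNReal.ofReal_ne_top]

lemma strip_snd (f : ℝ → ℂ) (hf : AEMeasurable f (volume : Measure ℝ)) (δ : ℝ) :
    ∫⁻ p : ℝ × ℝ in {p : ℝ × ℝ | |p.1 - p.2| < δ}, (‖f p.2‖₊ : ℝ≥0∞)^2
      = (∫⁻ x, (‖f x‖₊ : ℝ≥0∞)^2) * ENNReal.ofReal (2*δ) := by
  have hA : MeasurableSet {p : ℝ × ℝ | |p.1 - p.2| < δ} :=
    measurableSet_lt (measurable_fst.sub measurable_snd).abs measurable_const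
  rw [← lintegral_indicator hA]
  rw [Measure.volume_eq_prod ℝ ℝ]
  have hm : AEMeasurable (fun p : ℝ × ℝ =>
      ({p : ℝ × ℝ | |p.1 - p.2| < δ}).indicator (fun p => (‖f p.2‖₊ : ℝ≥0∞)^2) p)
      ((volume : Measure ℝ).prod volume) :=
    ((hf.comp_snd.enorm).pow_const 2).indicator hA
  rw [lintegral_prod_symm _ hm]
  have inner : ∀ y : ℝ,
      (∫⁻ x, ({p : ℝ × ℝ | |p.1 - p.2| < δ}).indicator (fun p => (‖f p.2‖₊ : ℝ≥0∞)^2) (x, y))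
        = (‖f y‖₊ : ℝ≥0∞)^2 * ENNReal.ofReal (2*δ) := by
    intro y
    have e : ∀ x : ℝ, ({p : ℝ × ℝ | |p.1 - p.2| < δ}).indicator
        (fun p => (‖f p.2‖₊ : ℝ≥0∞)^2) (x, y)
        = (Ioo (y - δ) (y + δ)).indicator (fun _ => (‖f y‖₊ : ℝ≥0∞)^2) x := by
      intro x
      simp only [Set.indicator_apply, mem_setOf_eq]
      have hiff : |x - y| < δ ↔ x ∈ Ioo (y - δ) (y + δ) := by
        rw [abs_sub_comm]; exact ioo_iff
      rw [if_congr hiff rfl rfl]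
    rw [lintegral_congr e, lintegral_indicator_const measurableSet_Ioo, Real.volume_Ioo,
      show y + δ - (y - δ) = 2*δ by ring]
  rw [lintegral_congr inner, lintegral_mul_const' _ _ ENNReal.ofReal_ne_top]

lemma ptbound (h : ℝ → ℂ) {δ : ℝ} (hδ : 0 < δ) {ω ξ : ℝ} (h1 : |ω - ξ| < δ) (h2 : δ < |ω + ξ|) :
    (‖h ω - h ξ‖₊ : ℝ≥0∞)^2 / (‖ω - ξ‖₊ : ℝ≥0∞)^2 ≤
      ENNReal.ofReal (8/δ^2) * ((‖(ω:ℂ)*h ω - (ξ:ℂ)*h ξ‖₊ : ℝ≥0∞)^2 / (‖ω - ξ‖₊ : ℝ≥0∞)^2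
        + ((‖h ω‖₊ : ℝ≥0∞)^2 + (‖h ξ‖₊ : ℝ≥0∞)^2)) := by
  rcases eq_or_ne ω ξ with rfl | hne
  · simp
  · have hmax : δ/2 < |ω| ∨ δ/2 < |ξ| := by
      by_contra hc; push_neg at hc
      nlinarith [abs_add_le ω ξ, hc.1, hc.2, h2]
    rcases hmax with hω | hξ
    · refine (enn_half h hδ hω hne).trans ?_
      gcongr
      exact le_add_self
    · have e := enn_half h hδ hξ hne.symm
      rw [nnnorm_sub_rev' (h ξ) (h ω), nnnorm_sub_rev' ((ξ:ℂ)*h ξ) ((ω:ℂ)*h ω),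
        nnnorm_sub_rev' ξ ω] at e
      refine e.trans ?_
      gcongr
      exact le_self_add

theorem stmt_10 (h : ℝ → ℂ) (hh : MemLp h 2 volume)
    (hmul : MemH12 Set.univ (fun ω => (ω : ℂ) * h ω))
    (δ : ℝ) (hδ : 0 < δ) :
    (∫⁻ p : ℝ × ℝ in {p : ℝ × ℝ | |p.1 - p.2| < δ ∧ δ < |p.1 + p.2|},
        (‖h p.1 - h p.2‖₊ : ℝ≥0∞) ^ 2 / (‖p.1 - p.2‖₊ : ℝ≥0∞) ^ 2) < ⊤ := by
  have hm : AEMeasurable h volume := hh.1.aemeasurable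
  set C := ENNReal.ofReal (8/δ^2) with hCdef
  have hC : C ≠ ⊤ := ENNReal.ofReal_ne_top
  set S : Set (ℝ × ℝ) := {p : ℝ × ℝ | |p.1 - p.2| < δ ∧ δ < |p.1 + p.2|} with hSdef
  set A : Set (ℝ × ℝ) := {p : ℝ × ℝ | |p.1 - p.2| < δ} with hAdef
  have hAmeas : MeasurableSet A :=
    measurableSet_lt (measurable_fst.sub measurable_snd).abs measurable_const
  have hSmeas : MeasurableSet S :=
    hAmeas.inter (measurableSet_lt measurable_const (measurable_fst.add measurable_snd).abs)
  set T1 : ℝ × ℝ → ℝ≥0∞ :=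
    fun p => (‖(p.1 : ℂ) * h p.1 - (p.2 : ℂ) * h p.2‖₊ : ℝ≥0∞)^2 / (‖p.1 - p.2‖₊ : ℝ≥0∞)^2
    with hT1def
  -- L² bound
  have hL2 : (∫⁻ x, (‖h x‖₊ : ℝ≥0∞)^2) < ⊤ := by
    have t : (∫⁻ x, (‖h x‖₊ : ℝ≥0∞) ^ ((2 : ℝ≥0∞).toReal)) < ⊤ :=
      lintegral_rpow_enorm_lt_top_of_eLpNorm_lt_top (f := h)
      (two_ne_zero) (ENNReal.ofNat_ne_top) hh.2
    have e : ∀ x : ℝ, (‖h x‖₊ : ℝ≥0∞) ^ ((2 : ℝ≥0∞).toReal) = (‖h x‖₊ : ℝ≥0∞)^2 := by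
      intro x
      rw [ENNReal.toReal_ofNat, show ((2:ℝ)) = ((2:ℕ):ℝ) by norm_num, ENNReal.rpow_natCast]
    rwa [lintegral_congr e] at t
  -- Gagliardo bound
  have hG : (∫⁻ p : ℝ × ℝ, T1 p) < ⊤ := by
    have t := hmul.2
    unfold gagliardo at t
    rwa [Set.univ_prod_univ, Measure.restrict_univ] at t
  -- measurability of T1
  have hgm : AEMeasurable (fun ω : ℝ => (ω : ℂ) * h ω) volume :=
    Complex.measurable_ofReal.aemeasurable.mul hm
  have hT1m : AEMeasurable T1 (volume : Measure (ℝ × ℝ)) := by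
    have h1 : AEMeasurable (fun p : ℝ × ℝ => (p.1 : ℂ) * h p.1)
        ((volume : Measure ℝ).prod volume) := hgm.comp_fst
    have h2 : AEMeasurable (fun p : ℝ × ℝ => (p.2 : ℂ) * h p.2)
        ((volume : Measure ℝ).prod volume) := hgm.comp_snd
    exact ((h1.sub h2).enorm.pow_const 2).div
      (((measurable_fst.sub measurable_snd).enorm.pow_const 2).aemeasurable)
  have hhfm : AEMeasurable (fun p : ℝ × ℝ => (‖h p.1‖₊ : ℝ≥0∞)^2)
      (volume : Measure (ℝ × ℝ)) := (AEMeasurable.comp_fst (ν := volume) hm).enorm.pow_const 2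
  calc (∫⁻ p : ℝ × ℝ in S, (‖h p.1 - h p.2‖₊ : ℝ≥0∞) ^ 2 / (‖p.1 - p.2‖₊ : ℝ≥0∞) ^ 2)
      ≤ ∫⁻ p in S, C * (T1 p + ((‖h p.1‖₊ : ℝ≥0∞)^2 + (‖h p.2‖₊ : ℝ≥0∞)^2)) :=
        setLIntegral_mono' hSmeas (fun p hp => ptbound h hδ hp.1 hp.2)
    _ = ∫⁻ p in S, (C * T1 p + C * ((‖h p.1‖₊ : ℝ≥0∞)^2 + (‖h p.2‖₊ : ℝ≥0∞)^2)) := by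
        simp only [mul_add]
    _ = (∫⁻ p in S, C * T1 p) + ∫⁻ p in S, C * ((‖h p.1‖₊ : ℝ≥0∞)^2 + (‖h p.2‖₊ : ℝ≥0∞)^2) :=
        lintegral_add_left' ((hT1m.const_mul C).restrict) _
    _ ≤ C * (∫⁻ p : ℝ × ℝ, T1 p)
        + C * ((∫⁻ p in A, (‖h p.1‖₊ : ℝ≥0∞)^2) + ∫⁻ p in A, (‖h p.2‖₊ : ℝ≥0∞)^2) := by
        gcongr ?_ + ?_
        · rw [lintegral_const_mul' _ _ hC]
          exact mul_le_mul_right (setLIntegral_le_lintegral _ _) C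
        · calc (∫⁻ p in S, C * ((‖h p.1‖₊ : ℝ≥0∞)^2 + (‖h p.2‖₊ : ℝ≥0∞)^2))
              ≤ ∫⁻ p in A, C * ((‖h p.1‖₊ : ℝ≥0∞)^2 + (‖h p.2‖₊ : ℝ≥0∞)^2) :=
                lintegral_mono_set (fun p hp => hp.1)
            _ = C * ∫⁻ p in A, ((‖h p.1‖₊ : ℝ≥0∞)^2 + (‖h p.2‖₊ : ℝ≥0∞)^2) :=
                lintegral_const_mul' _ _ hC
            _ = C * ((∫⁻ p in A, (‖h p.1‖₊ : ℝ≥0∞)^2) + ∫⁻ p in A, (‖h p.2‖₊ : ℝ≥0∞)^2) := by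
                rw [lintegral_add_left' (hhfm.restrict) _]
    _ < ⊤ := by
        rw [strip_fst h hm δ, strip_snd h hm δ]
        refine ENNReal.add_lt_top.2 ⟨?_, ?_⟩
        · exact ENNReal.mul_lt_top hC.lt_top hG
        · refine ENNReal.mul_lt_top hC.lt_top ?_
          refine ENNReal.add_lt_top.2 ⟨?_, ?_⟩ <;>
            exact ENNReal.mul_lt_top hL2 ENNReal.ofReal_lt_top
end

section
/- Let E : (−δ,δ) → ℂ be C¹ with E(0) = 0 and bounded derivative, and let g ∈ L²((−δ,δ)) be such that the function ω ↦ ω·g(ω) is in H^{1/2}((−δ,δ)). Then the product E·g belongs to H^{1/2}((−δ,δ)). -/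
open MeasureTheory Set
open scoped ENNReal FourierTransform

theorem stmt_15 (δ M : ℝ) (hδ : 0 < δ) (E : ℝ → ℂ) (E' : ℝ → ℂ)
    (hderiv : ∀ x ∈ Set.Ioo (-δ) δ, HasDerivAt E (E' x) x)
    (hcont : ContinuousOn E' (Set.Ioo (-δ) δ))
    (hE0 : E 0 = 0)
    (hM : ∀ x ∈ Set.Ioo (-δ) δ, ‖E' x‖ ≤ M)
    (g : ℝ → ℂ) (hg : MemLp g 2 (volume.restrict (Set.Ioo (-δ) δ)))
    (hmul : MemH12 (Set.Ioo (-δ) δ) (fun ω => (ω : ℂ) * g ω)) :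
    MemH12 (Set.Ioo (-δ) δ) (fun ω => E ω * g ω) := by
  set Ω : Set ℝ := Set.Ioo (-δ) δ with hΩdef
  have hmes : MeasurableSet Ω := measurableSet_Ioo
  have h0 : (0:ℝ) ∈ Ω := ⟨by linarith, hδ⟩
  have hM0 : 0 ≤ M := (norm_nonneg _).trans (hM 0 h0)
  have hlip : ∀ x ∈ Ω, ∀ y ∈ Ω, ‖E y - E x‖ ≤ M * ‖y - x‖ := fun x hx y hy =>
    Convex.norm_image_sub_le_of_norm_hasDerivWithin_le
      (fun z hz => (hderiv z hz).hasDerivWithinAt) hM (convex_Ioo _ _) hx hy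
  have hEb : ∀ x ∈ Ω, ‖E x‖ ≤ M * |x| := by
    intro x hx
    have := hlip 0 h0 x hx
    simpa [hE0, Real.norm_eq_abs] using this
  -- membership in L²
  have hEcont : ContinuousOn E Ω := fun x hx => ((hderiv x hx).continuousAt).continuousWithinAt
  have hEgm : AEStronglyMeasurable (fun ω => E ω * g ω) (volume.restrict Ω) :=
    (hEcont.aestronglyMeasurable hmes).mul hg.aestronglyMeasurable
  have hmem : MemLp (fun ω => E ω * g ω) 2 (volume.restrict Ω) := by
    refine MemLp.of_le (hg.const_mul (((M*δ:ℝ):ℂ))) hEgm ?_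
    filter_upwards [ae_restrict_mem hmes] with x hx
    have h1 : ‖E x‖ ≤ M * δ := by
      refine (hEb x hx).trans ?_
      have : |x| ≤ δ := le_of_lt (abs_lt.mpr ⟨hx.1, hx.2⟩)
      nlinarith
    calc ‖E x * g x‖ = ‖E x‖ * ‖g x‖ := norm_mul _ _
      _ ≤ (M*δ) * ‖g x‖ := by
          exact mul_le_mul_of_nonneg_right h1 (norm_nonneg _)
      _ = ‖((M*δ:ℝ):ℂ) * g x‖ := by
          rw [norm_mul, Complex.norm_real, Real.norm_eq_abs, abs_of_nonneg (by nlinarith)]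
  refine ⟨hmem, ?_⟩
  -- pointwise key inequality
  have key : ∀ ω ∈ Ω, ∀ ξ ∈ Ω,
      ‖E ω * g ω - E ξ * g ξ‖ ≤
        M * ‖(ω:ℂ) * g ω - (ξ:ℂ) * g ξ‖ + 2 * M * (‖g ξ‖ * ‖ω - ξ‖) := by
    intro ω hω ξ hξ
    by_cases hω0 : ω = 0
    · subst hω0
      have h1 : ‖E 0 * g 0 - E ξ * g ξ‖ = ‖E ξ‖ * ‖g ξ‖ := by
        rw [hE0, zero_mul, zero_sub, norm_neg, norm_mul]
      have h2 : ‖(0:ℝ) - ξ‖ = |ξ| := by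
        rw [zero_sub, norm_neg, Real.norm_eq_abs]
      rw [h1, h2]
      have h3 : ‖E ξ‖ * ‖g ξ‖ ≤ M * |ξ| * ‖g ξ‖ :=
        mul_le_mul_of_nonneg_right (hEb ξ hξ) (norm_nonneg _)
      have h4 : M * |ξ| * ‖g ξ‖ = M * (‖g ξ‖ * |ξ|) := by ring
      rw [h4] at h3
      nlinarith [mul_nonneg hM0 (norm_nonneg (((0:ℝ):ℂ) * g 0 - (ξ:ℂ) * g ξ)),
        mul_nonneg hM0 (mul_nonneg (norm_nonneg (g ξ)) (abs_nonneg ξ))]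
    · have hωC : (ω:ℂ) ≠ 0 := Complex.ofReal_ne_zero.mpr hω0
      have hid : E ω * g ω - E ξ * g ξ
          = (E ω / ω) * ((ω:ℂ) * g ω - (ξ:ℂ) * g ξ)
            + g ξ * (((ξ:ℂ) - ω)/ω * E ω + (E ω - E ξ)) := by
        field_simp
        ring
      have t1 : ‖E ω / (ω:ℂ)‖ ≤ M := by
        rw [norm_div, Complex.norm_real, Real.norm_eq_abs, div_le_iff₀ (abs_pos.mpr hω0)]
        exact hEb ω hω
      have t2 : ‖((ξ:ℂ) - ω)/ω * E ω + (E ω - E ξ)‖ ≤ 2 * M * ‖ω - ξ‖ := by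
        have habs : ‖((ξ:ℂ) - ω)/ω‖ = |ξ - ω| / |ω| := by
          rw [norm_div]
          rw [show ((ξ:ℂ) - ω) = ((ξ - ω : ℝ) : ℂ) by push_cast; ring]
          rw [Complex.norm_real, Complex.norm_real, Real.norm_eq_abs, Real.norm_eq_abs]
        calc ‖((ξ:ℂ) - ω)/ω * E ω + (E ω - E ξ)‖
            ≤ ‖((ξ:ℂ) - ω)/ω‖ * ‖E ω‖ + ‖E ω - E ξ‖ := by
              refine (norm_add_le _ _).trans ?_
              rw [norm_mul]
          _ ≤ (|ξ - ω| / |ω|) * (M * |ω|) + M * ‖ω - ξ‖ := by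
              refine add_le_add ?_ (hlip ξ hξ ω hω)
              rw [habs]
              exact mul_le_mul_of_nonneg_left (hEb ω hω) (by positivity)
          _ = 2 * M * ‖ω - ξ‖ := by
              rw [Real.norm_eq_abs, abs_sub_comm ω ξ]
              field_simp [abs_ne_zero.mpr hω0]
              ring
      calc ‖E ω * g ω - E ξ * g ξ‖
            = ‖(E ω / ω) * ((ω:ℂ) * g ω - (ξ:ℂ) * g ξ)
              + g ξ * (((ξ:ℂ) - ω)/ω * E ω + (E ω - E ξ))‖ := by rw [← hid]
        _ ≤ ‖E ω / (ω:ℂ)‖ * ‖(ω:ℂ) * g ω - (ξ:ℂ) * g ξ‖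
              + ‖g ξ‖ * ‖((ξ:ℂ) - ω)/ω * E ω + (E ω - E ξ)‖ := by
              refine (norm_add_le _ _).trans ?_
              rw [norm_mul, norm_mul]
        _ ≤ M * ‖(ω:ℂ) * g ω - (ξ:ℂ) * g ξ‖ + 2 * M * (‖g ξ‖ * ‖ω - ξ‖) := by
              refine add_le_add
                (mul_le_mul_of_nonneg_right t1 (norm_nonneg _)) ?_
              calc ‖g ξ‖ * ‖((ξ:ℂ) - ω)/ω * E ω + (E ω - E ξ)‖
                    ≤ ‖g ξ‖ * (2 * M * ‖ω - ξ‖) :=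
                      mul_le_mul_of_nonneg_left t2 (norm_nonneg _)
                _ = 2 * M * (‖g ξ‖ * ‖ω - ξ‖) := by ring
  -- ENNReal setup
  set μ : Measure ℝ := volume.restrict Ω with hμdef
  have hμprod : (volume : Measure (ℝ×ℝ)).restrict (Ω ×ˢ Ω) = μ.prod μ := by
    rw [Measure.volume_eq_prod, Measure.prod_restrict]
  set N : NNReal := Real.toNNReal M with hN
  have keyE : ∀ p : ℝ × ℝ, p ∈ Ω ×ˢ Ω →
      (‖E p.1 * g p.1 - E p.2 * g p.2‖₊ : ℝ≥0∞) ^ 2 / (‖p.1 - p.2‖₊ : ℝ≥0∞) ^ 2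
        ≤ 2 * (N : ℝ≥0∞) ^ 2 *
            ((‖(p.1:ℂ) * g p.1 - (p.2:ℂ) * g p.2‖₊ : ℝ≥0∞) ^ 2 / (‖p.1 - p.2‖₊ : ℝ≥0∞) ^ 2)
          + 8 * (N : ℝ≥0∞) ^ 2 * (‖g p.2‖₊ : ℝ≥0∞) ^ 2 := by
    rintro ⟨ω, ξ⟩ ⟨hω, hξ⟩
    dsimp only at hω hξ ⊢
    by_cases heq : ω = ξ
    · subst heq; simp
    · have hd0 : (‖ω - ξ‖₊ : ℝ≥0∞) ≠ 0 := by
        simp [sub_ne_zero.mpr heq]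
      have hdt : (‖ω - ξ‖₊ : ℝ≥0∞) ≠ ⊤ := ENNReal.coe_ne_top
      have hsq : (‖E ω * g ω - E ξ * g ξ‖₊ : NNReal) ^ 2
          ≤ 2 * N ^ 2 * ‖(ω:ℂ) * g ω - (ξ:ℂ) * g ξ‖₊ ^ 2
            + 8 * N ^ 2 * (‖g ξ‖₊ ^ 2 * ‖ω - ξ‖₊ ^ 2) := by
        have h := key ω hω ξ hξ
        rw [← NNReal.coe_le_coe]
        push_cast
        have hNM : (N : ℝ) = M := Real.coe_toNNReal M hM0
        rw [hNM]
        nlinarith [norm_nonneg (E ω * g ω - E ξ * g ξ),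
          norm_nonneg ((ω:ℂ) * g ω - (ξ:ℂ) * g ξ),
          mul_nonneg (norm_nonneg (g ξ)) (norm_nonneg (ω - ξ)), hM0,
          sq_nonneg (M * ‖(ω:ℂ) * g ω - (ξ:ℂ) * g ξ‖ - 2 * M * (‖g ξ‖ * ‖ω - ξ‖)),
          mul_nonneg hM0 (norm_nonneg ((ω:ℂ) * g ω - (ξ:ℂ) * g ξ)),
          mul_nonneg hM0 (mul_nonneg (norm_nonneg (g ξ)) (norm_nonneg (ω - ξ)))]
      rw [ENNReal.div_le_iff (pow_ne_zero 2 hd0) (ENNReal.pow_ne_top hdt)]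
      have hcancel : (2 * (N : ℝ≥0∞) ^ 2 *
            ((‖(ω:ℂ) * g ω - (ξ:ℂ) * g ξ‖₊ : ℝ≥0∞) ^ 2 / (‖ω - ξ‖₊ : ℝ≥0∞) ^ 2)
          + 8 * (N : ℝ≥0∞) ^ 2 * (‖g ξ‖₊ : ℝ≥0∞) ^ 2) * (‖ω - ξ‖₊ : ℝ≥0∞) ^ 2
          = 2 * (N : ℝ≥0∞) ^ 2 * (‖(ω:ℂ) * g ω - (ξ:ℂ) * g ξ‖₊ : ℝ≥0∞) ^ 2
            + 8 * (N : ℝ≥0∞) ^ 2 * ((‖g ξ‖₊ : ℝ≥0∞) ^ 2 * (‖ω - ξ‖₊ : ℝ≥0∞) ^ 2) := by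
        rw [add_mul, mul_assoc (2 * (N : ℝ≥0∞) ^ 2),
          ENNReal.div_mul_cancel (pow_ne_zero 2 hd0) (ENNReal.pow_ne_top hdt), mul_assoc]
        ring
      rw [hcancel]
      exact_mod_cast hsq
  -- measurability
  have hum : AEMeasurable (fun ω : ℝ => (ω:ℂ) * g ω) μ := hmul.1.aestronglyMeasurable.aemeasurable
  have hgm : AEMeasurable g μ := hg.aestronglyMeasurable.aemeasurable
  have hf1 : AEMeasurable
      (fun p : ℝ × ℝ =>
        (‖(p.1:ℂ) * g p.1 - (p.2:ℂ) * g p.2‖₊ : ℝ≥0∞) ^ 2 / (‖p.1 - p.2‖₊ : ℝ≥0∞) ^ 2)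
      (μ.prod μ) := by
    have h1 : AEMeasurable (fun p : ℝ × ℝ => (p.1:ℂ) * g p.1 - (p.2:ℂ) * g p.2) (μ.prod μ) :=
      hum.comp_fst.sub hum.comp_snd
    exact (h1.enorm.pow_const 2).div
      (((measurable_fst.sub measurable_snd).enorm.pow_const 2).aemeasurable)
  -- finiteness of ∫ ‖g‖²
  have hgone : ∫⁻ x, (‖g x‖₊ : ℝ≥0∞) ^ 2 ∂μ < ⊤ := by
    have h := hg.2
    rw [eLpNorm_eq_lintegral_rpow_enorm_toReal two_ne_zero ENNReal.ofNat_ne_top] at h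
    simp only [ENNReal.toReal_ofNat] at h
    rw [ENNReal.rpow_lt_top_iff_of_pos (by norm_num : (0:ℝ) < 1/2)] at h
    have hx : ∀ x : ℝ, (‖g x‖₊ : ℝ≥0∞) ^ (2:ℝ) = (‖g x‖₊ : ℝ≥0∞) ^ (2:ℕ) := fun x => by
      rw [← ENNReal.rpow_natCast]; norm_num
    simp [hx] at h; exact h
  have hInt2 : ∫⁻ p : ℝ × ℝ, (‖g p.2‖₊ : ℝ≥0∞) ^ 2 ∂(μ.prod μ) < ⊤ := by
    have h := lintegral_prod_mul (μ := μ) (ν := μ) (f := fun _ : ℝ => (1:ℝ≥0∞))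
      (g := fun x : ℝ => (‖g x‖₊ : ℝ≥0∞) ^ 2) aemeasurable_const (hgm.enorm.pow_const 2)
    simp only [one_mul] at h
    rw [h, lintegral_one]
    refine ENNReal.mul_lt_top ?_ hgone
    rw [hμdef, Measure.restrict_apply_univ, hΩdef, Real.volume_Ioo]
    exact ENNReal.ofReal_lt_top
  have h2N : (2 * (N : ℝ≥0∞) ^ 2) ≠ ⊤ :=
    ENNReal.mul_ne_top (by norm_num) (ENNReal.pow_ne_top ENNReal.coe_ne_top)
  have h8N : (8 * (N : ℝ≥0∞) ^ 2) ≠ ⊤ :=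
    ENNReal.mul_ne_top (by norm_num) (ENNReal.pow_ne_top ENNReal.coe_ne_top)
  have hbound : gagliardo Ω (fun ω => E ω * g ω)
      ≤ ∫⁻ p : ℝ × ℝ in Ω ×ˢ Ω,
          (2 * (N : ℝ≥0∞) ^ 2 *
              ((‖(p.1:ℂ) * g p.1 - (p.2:ℂ) * g p.2‖₊ : ℝ≥0∞) ^ 2 / (‖p.1 - p.2‖₊ : ℝ≥0∞) ^ 2)
            + 8 * (N : ℝ≥0∞) ^ 2 * (‖g p.2‖₊ : ℝ≥0∞) ^ 2) := by
    refine lintegral_mono_ae ?_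
    filter_upwards [ae_restrict_mem (hmes.prod hmes)] with p hp
    exact keyE p hp
  refine lt_of_le_of_lt hbound ?_
  rw [hμprod, lintegral_add_left' (hf1.const_mul _),
    lintegral_const_mul' _ _ h2N, lintegral_const_mul' _ _ h8N]
  refine ENNReal.add_lt_top.mpr ⟨?_, ?_⟩
  · refine ENNReal.mul_lt_top h2N.lt_top ?_
    have h := hmul.2
    unfold gagliardo at h
    rw [hμprod] at h
    exact h
  · exact ENNReal.mul_lt_top h8N.lt_top hInt2
end
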